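/- Let G = (V,E) be an infinite (g,o)-growing graph with g ≥ 1. Then for every finite nonempty subset S ⊆ V one has |∂_E S| ≥ g|S|, where ∂_E S is the set of edges with exactly one endpoint in S; consequently the edge isoperimetric constant i_e(G) = inf{ |∂_E S|/|S| : S ⊆ V finite nonempty } satisfies i_e(G) ≥ g > 0, i.e. G is nonamenable. -/

import Mathlib

/- Common framework: Ising model with boundary conditions on (finite pieces of)
   locally finite graphs, heat-bath Glauber dynamics quantities. -/

open Finset
open scoped Classical

noncomputable section

namespace IsingGlauber

/-- The real spin value of a Boolean spin: `true ↦ +1`, `false ↦ -1`. -/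
def spin (b : Bool) : ℝ := if b then 1 else -1

variable {V : Type*}

/-- Neighbourhood finset of a vertex, from an explicit local finiteness witness. -/
def nbr (G : SimpleGraph V) (hlf : G.LocallyFinite) (x : V) : Finset V :=
  @SimpleGraph.neighborFinset V G x (hlf x)

/-- `G` is `(g,o)`-growing: every vertex `x` (say at distance `r` from `o`) has at
    least `g` more neighbours in level `r+1` than in the ball of radius `r`. -/
def IsGrowing (G : SimpleGraph V) (hlf : G.LocallyFinite) (g : ℕ) (o : V) : Prop :=
  ∀ x : V,
    ((nbr G hlf x).filter fun z => G.dist o z ≤ G.dist o x).card + g ≤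
      ((nbr G hlf x).filter fun z => G.dist o z = G.dist o x + 1).card

variable [DecidableEq V]

/-- External vertex boundary of a finite vertex set. -/
def vbd (G : SimpleGraph V) (hlf : G.LocallyFinite) (A : Finset V) : Finset V :=
  A.biUnion (fun a => nbr G hlf a) \ A

/-- Closure `A ∪ ∂_V A` of a finite vertex set. -/
def cl (G : SimpleGraph V) (hlf : G.LocallyFinite) (A : Finset V) : Finset V :=
  A ∪ vbd G hlf A

/-- Ising Hamiltonian (zero field) with boundary: `Σ_{(x,y) ∈ E(A ∪ ∂_V A)} σ_x σ_y`,
    the sum over edges with both endpoints in `A ∪ ∂_V A` (each edge counted once). -/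
def energyB (G : SimpleGraph V) (hlf : G.LocallyFinite) (A : Finset V) (σ : V → Bool) : ℝ :=
  (1 / 2) * ∑ x ∈ cl G hlf A, ∑ y ∈ (cl G hlf A).filter (fun y => G.Adj x y),
    spin (σ x) * spin (σ y)

/-- Free-boundary Ising Hamiltonian: `Σ_{(x,y) ∈ E(A)} σ_x σ_y`,
    the sum over edges with both endpoints in `A` (each edge counted once). -/
def energyF (G : SimpleGraph V) (A : Finset V) (σ : V → Bool) : ℝ :=
  (1 / 2) * ∑ x ∈ A, ∑ y ∈ A.filter (fun y => G.Adj x y), spin (σ x) * spin (σ y)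

/-- The configuration equal to `p` on `A` and to `η` off `A`. -/
def patch (A : Finset V) (η : V → Bool) (p : ∀ a ∈ A, Bool) : V → Bool :=
  fun v => if h : v ∈ A then p v h else η v

/-- Unnormalised Gibbs sum over configurations agreeing with `η` off `A`,
    with energy functional `E` (which should already include the factor `β`). -/
def wsum (E : (V → Bool) → ℝ) (A : Finset V) (η : V → Bool) (f : (V → Bool) → ℝ) : ℝ :=
  ∑ p ∈ A.pi (fun _ => (Finset.univ : Finset Bool)),
    Real.exp (E (patch A η p)) * f (patch A η p)

/-- Gibbs expectation of `f` for the measure on region `A` with boundary condition `η`. -/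
def gExp (E : (V → Bool) → ℝ) (A : Finset V) (η : V → Bool) (f : (V → Bool) → ℝ) : ℝ :=
  wsum E A η f / wsum E A η (fun _ => 1)

/-- Gibbs probability of an event. -/
def gProb (E : (V → Bool) → ℝ) (A : Finset V) (η : V → Bool) (P : (V → Bool) → Prop) : ℝ :=
  gExp E A η (fun σ => if P σ then 1 else 0)

/-- Gibbs variance of `f`. -/
def gVar (E : (V → Bool) → ℝ) (A : Finset V) (η : V → Bool) (f : (V → Bool) → ℝ) : ℝ :=
  gExp E A η (fun σ => f σ ^ 2) - gExp E A η f ^ 2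

/-- Dirichlet form of the heat-bath Glauber dynamics:
    `D(f) = Σ_{x ∈ A} μ(Var_x(f))`, where `Var_x(f)(σ)` is the variance of `f`
    under the one-site conditional Gibbs measure at `x` given `σ` elsewhere. -/
def dirich (E : (V → Bool) → ℝ) (A : Finset V) (η : V → Bool) (f : (V → Bool) → ℝ) : ℝ :=
  ∑ x ∈ A, gExp E A η (fun σ => gVar E {x} σ f)

/-- Spectral gap `c_gap(μ) = inf { D(f)/Var(f) : Var(f) ≠ 0 }`. -/
def cgap (E : (V → Bool) → ℝ) (A : Finset V) (η : V → Bool) : ℝ :=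
  sInf {r : ℝ | ∃ f : (V → Bool) → ℝ, gVar E A η f ≠ 0 ∧ r = dirich E A η f / gVar E A η f}

/-- The edge boundary of `C`, encoded as ordered pairs `(u,v)` with `u ∈ C`,
    `v ∉ C` and `u ~ v`; these pairs are in bijection with the boundary edges. -/
def obd (G : SimpleGraph V) (hlf : G.LocallyFinite) (C : Finset V) : Finset (V × V) :=
  (C ×ˢ C.biUnion (fun c => nbr G hlf c)).filter (fun p => G.Adj p.1 p.2 ∧ p.2 ∉ C)

end IsingGlauber

open IsingGlauber

/-!
Sum the growth inequality over `S`. An up-edge `x → y` with both ends in `S` is, read backwards,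
a down-edge from `y ∈ S`, so the up-edges staying inside `S` are paid for by the down-edges
counted on the left; what is left over, at least `g` per vertex of `S`, leaves `S`.
-/

namespace IsingGlauber

theorem sum_card_filter_le_sum_card_filter_swap {α : Type*} (S : Finset α)
    {r s : α → α → Prop} [DecidableRel r] [DecidableRel s] (hrs : ∀ x y, r x y → s y x) :
    ∑ x ∈ S, #(S.filter (r x)) ≤ ∑ y ∈ S, #(S.filter (s y)) := by
  simp only [card_filter]
  rw [sum_comm]
  gcongr with y _ x _
  split_ifs <;> simp_all

variable {V : Type*} {G : SimpleGraph V} {hlf : G.LocallyFinite}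

theorem mem_nbr {x y : V} : y ∈ nbr G hlf x ↔ G.Adj x y := by
  simp [nbr]

variable [DecidableEq V]

theorem card_obd_eq_sum_card_filter_nbr (S : Finset V) :
    #(obd G hlf S) = ∑ x ∈ S, #((nbr G hlf x).filter (· ∉ S)) := by
  rw [obd, card_filter, sum_product]
  refine sum_congr rfl fun x hx => ?_
  rw [← card_filter]
  congr 1
  ext y
  simp only [mem_filter, mem_biUnion, mem_nbr]
  exact ⟨fun ⟨_, h⟩ => h, fun h => ⟨⟨x, hx, h.1⟩, h⟩⟩

theorem mul_card_le_card_obd_of_height (level : V → ℕ) {g : ℕ}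
    (hgrow : ∀ x, #((nbr G hlf x).filter (level · ≤ level x)) + g ≤
      #((nbr G hlf x).filter (level · = level x + 1))) (S : Finset V) :
    g * #S ≤ #(obd G hlf S) := by
  set down := fun x => #((nbr G hlf x).filter (level · ≤ level x))
  have up_le (x) : #((nbr G hlf x).filter (level · = level x + 1)) ≤
      #(S.filter fun y => G.Adj x y ∧ level y = level x + 1) +
        #((nbr G hlf x).filter (· ∉ S)) := by
    rw [← card_filter_add_card_filter_not (s := (nbr G hlf x).filter _) (p := (· ∈ S))]
    refine add_le_add (card_le_card fun y hy => ?_) (card_le_card fun y hy => ?_)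
    · simp only [mem_filter, mem_nbr] at hy ⊢
      exact ⟨hy.2, hy.1.1, hy.1.2⟩
    · simp only [mem_filter] at hy ⊢
      exact ⟨hy.1.1, hy.2⟩
  have inner_up_le : ∑ x ∈ S, #(S.filter fun y => G.Adj x y ∧ level y = level x + 1) ≤
      ∑ y ∈ S, down y := by
    refine (sum_card_filter_le_sum_card_filter_swap S
      (s := fun y x => G.Adj y x ∧ level x ≤ level y) ?_).trans (sum_le_sum fun y _ => ?_)
    · rintro x y ⟨hxy, hh⟩
      exact ⟨hxy.symm, by omega⟩
    · exact card_le_card fun x hx => by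
        simp only [mem_filter, mem_nbr] at hx ⊢
        exact hx.2
  have : ∑ x ∈ S, down x + g * #S ≤ ∑ x ∈ S, down x + #(obd G hlf S) := calc
    ∑ x ∈ S, down x + g * #S = ∑ x ∈ S, (down x + g) := by
      rw [sum_add_distrib, sum_const, smul_eq_mul, mul_comm]
    _ ≤ ∑ x ∈ S, #((nbr G hlf x).filter (level · = level x + 1)) :=
      sum_le_sum fun x _ => hgrow x
    _ ≤ ∑ x ∈ S, #(S.filter fun y => G.Adj x y ∧ level y = level x + 1) +
        #(obd G hlf S) := by
      rw [card_obd_eq_sum_card_filter_nbr, ← sum_add_distrib]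
      exact sum_le_sum fun x _ => up_le x
    _ ≤ ∑ x ∈ S, down x + #(obd G hlf S) := by gcongr
  exact Nat.le_of_add_le_add_left this

end IsingGlauber

theorem statement9_general {V : Type*} [DecidableEq V]
    (G : SimpleGraph V) (hlf : G.LocallyFinite)
    (g : ℕ) (o : V)
    (hgrow : IsGrowing G hlf g o) :
    (∀ S : Finset V, S.Nonempty → g * S.card ≤ (obd G hlf S).card) ∧
      ∀ S : Finset V, S.Nonempty → (g : ℝ) ≤ ((obd G hlf S).card : ℝ) / (S.card : ℝ) := by
  have key (S : Finset V) : g * S.card ≤ (obd G hlf S).card :=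
    mul_card_le_card_obd_of_height (G.dist o) hgrow S
  refine ⟨fun S _ => key S, fun S hS => ?_⟩
  rw [le_div_iff₀ (by exact_mod_cast hS.card_pos)]
  exact_mod_cast key S

/-- an infinite `(g,o)`-growing graph satisfies `|∂_E S| ≥ g|S|` for all
finite nonempty vertex sets `S`; consequently its edge isoperimetric (Cheeger)
constant is at least `g > 0`, i.e. the graph is nonamenable. -/
theorem statement9 {V : Type*} [DecidableEq V] [Infinite V]
    (G : SimpleGraph V) (hlf : G.LocallyFinite) (hconn : G.Connected)
    (g : ℕ) (hg : 1 ≤ g) (o : V)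
    (hgrow : IsGrowing G hlf g o) :
    (∀ S : Finset V, S.Nonempty → g * S.card ≤ (obd G hlf S).card) ∧
      ∀ S : Finset V, S.Nonempty → (g : ℝ) ≤ ((obd G hlf S).card : ℝ) / (S.card : ℝ) :=
  statement9_general G hlf g o hgrow
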